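/- Let X be a finite simple graph on n vertices with at least one edge, with minimal degree δ, maximal degree Δ, and largest Laplacian eigenvalue λ_max. Let α' be the independence number of the derived graph X' (the induced subgraph on the vertices of degree strictly less than Δ). Then the independence number α of X satisfies α ≤ n(1 − Δ/λ_max) + α'·(Δ − δ)/(λ_max − δ). -/

import Mathlib

/-!
Let `S` be a maximum independent set and `μ` an upper bound for the Laplacian spectrum. Since `L`
annihilates constant vectors, the Rayleigh bound applied to `x` minus its mean gives
`xᵀ L x ≤ μ (‖x‖² - (∑ x)² / n)`, while `xᵀ L x = ∑ dᵥ xᵥ²` when `x` is supported on `S`. The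
choice `xᵥ = 1 / (μ - dᵥ)` on `S` turns this into `∑_{v ∈ S} μ / (μ - dᵥ) ≤ n`. Vertices of `S`
of degree `Δ` contribute `μ / (μ - Δ)` each and the others, which form an independent set of the
derived graph, at least `μ / (μ - δ)`; solving for `|S|` gives the bound. The same inequality for
the indicator vector of a vertex of maximal degree shows `Δ < λ_max`.
-/

open Finset

/-- The independence number: the largest size of a set of pairwise non-adjacent vertices. -/
noncomputable def indepNum {V : Type*} (G : SimpleGraph V) : ℕ :=
  sSup {n | ∃ s : Finset V, (∀ v ∈ s, ∀ w ∈ s, ¬ G.Adj v w) ∧ s.card = n}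

/-- The degree of a vertex: the number of its neighbours. -/
noncomputable def deg {V : Type*} (G : SimpleGraph V) (v : V) : ℕ :=
  (G.neighborSet v).ncard

/-- The minimal degree. -/
noncomputable def minDeg {V : Type*} (G : SimpleGraph V) : ℕ :=
  sInf (Set.range (deg G))

/-- The maximal degree. -/
noncomputable def maxDeg {V : Type*} (G : SimpleGraph V) : ℕ :=
  sSup (Set.range (deg G))

/-- The largest eigenvalue of the Laplacian matrix `L = D - A`. -/
noncomputable def lapMax {V : Type*} [Fintype V] (G : SimpleGraph V) : ℝ :=
  letI := Classical.decEq V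
  letI := Classical.decRel G.Adj
  ⨆ i, (SimpleGraph.posSemidef_lapMatrix ℝ G).1.eigenvalues i

/-- The derived graph: the induced subgraph on the vertices of non-maximal degree. -/
noncomputable def derived {V : Type*} (G : SimpleGraph V) :
    SimpleGraph {v : V | deg G v < maxDeg G} :=
  G.induce {v : V | deg G v < maxDeg G}

open Matrix

namespace Matrix

lemma IsHermitian.dotProduct_mulVec_le {n : Type*} [Fintype n] [DecidableEq n]
    {A : Matrix n n ℝ} (hA : A.IsHermitian) {μ : ℝ} (hμ : ∀ i, hA.eigenvalues i ≤ μ)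
    (z : n → ℝ) : z ⬝ᵥ (A *ᵥ z) ≤ μ * (z ⬝ᵥ z) := by
  set U : Matrix n n ℝ := (hA.eigenvectorUnitary : Matrix n n ℝ)
  have hUt : star U = Uᵀ := by rw [star_eq_conjTranspose, conjTranspose_eq_transpose_of_trivial]
  have hUU : U * Uᵀ = 1 := hUt ▸ mem_unitaryGroup_iff.mp hA.eigenvectorUnitary.2
  set w := Uᵀ *ᵥ z
  have hnorm : z ⬝ᵥ z = w ⬝ᵥ w := by
    rw [dotProduct_mulVec, vecMul_transpose, mulVec_mulVec, hUU, one_mulVec]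
  have hquad : z ⬝ᵥ (A *ᵥ z) = ∑ i, hA.eigenvalues i * (w i * w i) := by
    conv_lhs => rw [hA.spectral_theorem, Unitary.conjStarAlgAut_apply]
    rw [hUt, ← mulVec_mulVec, ← mulVec_mulVec, dotProduct_mulVec, ← mulVec_transpose]
    simp only [dotProduct, mulVec_diagonal, Function.comp, RCLike.ofReal_real_eq_id, id]
    exact sum_congr rfl fun i _ => by ring
  rw [hquad, hnorm, dotProduct, mul_sum]
  exact sum_le_sum fun i _ => mul_le_mul_of_nonneg_right (hμ i) (mul_self_nonneg _)

end Matrix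

namespace SimpleGraph

variable {V : Type*} {G : SimpleGraph V}

lemma isIndepSet_iff_forall_not_adj {s : Set V} :
    G.IsIndepSet s ↔ ∀ v ∈ s, ∀ w ∈ s, ¬G.Adj v w :=
  ⟨fun h _ hv _ hw hvw => h hv hw hvw.ne hvw, fun h _ hv _ hw _ => h _ hv _ hw⟩

lemma IsIndepSet.card_le_indepNum_induce [Finite V] {s : Set V} {t : Finset V}
    (ht : G.IsIndepSet t) (hts : ↑t ⊆ s) : #t ≤ (G.induce s).indepNum := by
  classical
  have hcard : #(t.subtype (· ∈ s)) = #t := by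
    rw [card_subtype, filter_true_of_mem fun v hv => hts hv]
  rw [← hcard]
  refine IsIndepSet.card_le_indepNum fun a ha b hb hab => ?_
  exact ht (mem_subtype.mp ha) (mem_subtype.mp hb) (Subtype.val_injective.ne hab)

variable [Fintype V] [DecidableRel G.Adj]

lemma dotProduct_adjMatrix_mulVec_eq_zero {R : Type*} [CommRing R] {x : V → R}
    (hx : ∀ i j, G.Adj i j → x i * x j = 0) : x ⬝ᵥ (G.adjMatrix R *ᵥ x) = 0 := by
  simp only [dotProduct, adjMatrix_mulVec_apply, mul_sum]
  exact sum_eq_zero fun i _ => sum_eq_zero fun j hj => hx i j ((G.mem_neighborFinset i j).mp hj)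

variable [DecidableEq V] {μ : ℝ}

lemma dotProduct_lapMatrix_mulVec_eq_sum_degree {R : Type*} [CommRing R] {x : V → R}
    (hx : ∀ i j, G.Adj i j → x i * x j = 0) :
    x ⬝ᵥ (G.lapMatrix R *ᵥ x) = ∑ i, G.degree i * x i * x i := by
  rw [lapMatrix, sub_mulVec, dotProduct_sub, dotProduct_mulVec_degMatrix,
    dotProduct_adjMatrix_mulVec_eq_zero hx, sub_zero]

lemma dotProduct_lapMatrix_mulVec_le [Nonempty V]
    (hμ : ∀ i, (G.posSemidef_lapMatrix ℝ).1.eigenvalues i ≤ μ) (x : V → ℝ) :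
    x ⬝ᵥ (G.lapMatrix ℝ *ᵥ x) ≤ μ * (x ⬝ᵥ x - (∑ i, x i) ^ 2 / Fintype.card V) := by
  set c := (∑ i, x i) / Fintype.card V
  set y := x - c • fun _ => (1 : ℝ)
  have hLy : G.lapMatrix ℝ *ᵥ y = G.lapMatrix ℝ *ᵥ x := by
    rw [mulVec_sub, mulVec_smul, lapMatrix_mulVec_const_eq_zero, smul_zero, sub_zero]
  have hquad : y ⬝ᵥ (G.lapMatrix ℝ *ᵥ y) = x ⬝ᵥ (G.lapMatrix ℝ *ᵥ x) := by
    rw [hLy, sub_dotProduct, smul_dotProduct, dotProduct_comm _ (_ *ᵥ x), dotProduct_mulVec,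
      ← mulVec_transpose, (G.isSymm_lapMatrix ℝ).eq, lapMatrix_mulVec_const_eq_zero,
      zero_dotProduct, smul_zero, sub_zero, dotProduct_comm]
  have hnorm : y ⬝ᵥ y = x ⬝ᵥ x - (∑ i, x i) ^ 2 / Fintype.card V := by
    have hn : (Fintype.card V : ℝ) ≠ 0 := Nat.cast_ne_zero.mpr Fintype.card_ne_zero
    simp only [y, c, dotProduct, Pi.sub_apply, Pi.smul_apply, smul_eq_mul, mul_one, sub_mul, mul_sub, sum_sub_distrib, ← sum_mul, ← mul_sum, sum_const, card_univ,
      nsmul_eq_mul]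
    field_simp
    ring
  rw [← hquad, ← hnorm]
  exact (G.posSemidef_lapMatrix ℝ).1.dotProduct_mulVec_le hμ y

lemma degree_lt_of_eigenvalues_le (hμ : ∀ i, (G.posSemidef_lapMatrix ℝ).1.eigenvalues i ≤ μ)
    {v : V} (hv : 0 < G.degree v) : (G.degree v : ℝ) < μ := by
  have : Nonempty V := ⟨v⟩
  set x : V → ℝ := Pi.single v 1
  have hx : ∀ i j, G.Adj i j → x i * x j = 0 := by
    intro i j hij
    rcases eq_or_ne i v with rfl | hi
    · simp [x, hij.ne.symm]
    · simp [x, Pi.single_apply, hi]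
  have h := dotProduct_lapMatrix_mulVec_le hμ x
  rw [dotProduct_lapMatrix_mulVec_eq_sum_degree hx] at h
  simp only [x, Pi.single_apply, mul_ite, mul_one, mul_zero, sum_ite_eq', mem_univ, if_true,
    dotProduct_single] at h
  have hd : (0 : ℝ) < G.degree v := Nat.cast_pos.mpr hv
  have ht : 0 < (1 : ℝ) ^ 2 / Fintype.card V := by positivity
  have ht1 : (1 : ℝ) ^ 2 / Fintype.card V ≤ 1 := by
    rw [one_pow, div_le_one (by positivity), Nat.one_le_cast]; exact Fintype.card_pos
  nlinarith

lemma sum_div_sub_degree_le (hμ : ∀ i, (G.posSemidef_lapMatrix ℝ).1.eigenvalues i ≤ μ)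
    {S : Finset V} (hS : G.IsIndepSet S) (hdeg : ∀ v ∈ S, (G.degree v : ℝ) < μ) :
    ∑ v ∈ S, μ / (μ - G.degree v) ≤ Fintype.card V := by
  rcases S.eq_empty_or_nonempty with rfl | ⟨v, -⟩
  · simp
  have : Nonempty V := ⟨v⟩
  set x : V → ℝ := fun v => if v ∈ S then (μ - G.degree v)⁻¹ else 0
  have hx : ∀ i j, G.Adj i j → x i * x j = 0 := by
    intro i j hij
    by_cases hi : i ∈ S
    · by_cases hj : j ∈ S
      · exact absurd hij (hS hi hj hij.ne)
      · simp [x, hj]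
    · simp [x, hi]
  have hxx : ∀ i, (μ - G.degree i) * (x i * x i) = x i := by
    intro i
    by_cases hi : i ∈ S
    · have : μ - G.degree i ≠ 0 := (sub_pos.mpr (hdeg i hi)).ne'
      simp only [x, if_pos hi]
      field_simp
    · simp [x, hi]
  set T := ∑ i, x i
  have hT : 0 ≤ T := sum_nonneg fun i _ => by
    by_cases hi : i ∈ S
    · simpa [x, hi] using (hdeg i hi).le
    · simp [x, hi]
  have hquad := dotProduct_lapMatrix_mulVec_le hμ x
  rw [dotProduct_lapMatrix_mulVec_eq_sum_degree hx] at hquad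
  have hμT : μ * T ^ 2 / Fintype.card V ≤ T := by
    have : μ * (x ⬝ᵥ x) - ∑ i, (G.degree i : ℝ) * x i * x i = T := by
      rw [dotProduct, mul_sum, ← sum_sub_distrib]
      exact sum_congr rfl fun i _ => by linear_combination hxx i
    linarith [mul_div_assoc μ (T ^ 2) (Fintype.card V : ℝ)]
  have hsum : ∑ v ∈ S, μ / (μ - G.degree v) = μ * T := by
    simp only [T, x, mul_sum, sum_ite_mem, univ_inter, div_eq_mul_inv]
  rw [hsum]
  rcases hT.eq_or_lt with hT0 | hTpos
  · rw [← hT0, mul_zero]; positivity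
  · have hn : (0 : ℝ) < Fintype.card V := by positivity
    rw [div_le_iff₀ hn] at hμT
    nlinarith

lemma card_le_of_isIndepSet (hμ : ∀ i, (G.posSemidef_lapMatrix ℝ).1.eigenvalues i ≤ μ)
    (hΔμ : (G.maxDegree : ℝ) < μ) {S : Finset V} (hS : G.IsIndepSet S) :
    (#S : ℝ) ≤ Fintype.card V * (1 - G.maxDegree / μ)
      + #{v ∈ S | G.degree v < G.maxDegree} * (G.maxDegree - G.minDegree) / (μ - G.minDegree) := by
  set Δ : ℝ := ((G.maxDegree : ℕ) : ℝ)
  set δ : ℝ := ((G.minDegree : ℕ) : ℝ)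
  have hδμ : δ < μ := (Nat.cast_le.mpr G.minDegree_le_maxDegree).trans_lt hΔμ
  have hμ0 : 0 < μ := (Nat.cast_nonneg _).trans_lt hΔμ
  have hdeg : ∀ v, (G.degree v : ℝ) < μ := fun v =>
    (Nat.cast_le.mpr (G.degree_le_maxDegree v)).trans_lt hΔμ
  have hmax : ∀ v ∈ {v ∈ S | ¬G.degree v < G.maxDegree}, μ / (μ - Δ) ≤ μ / (μ - G.degree v) :=
    fun v hv => by
      rw [le_antisymm (G.degree_le_maxDegree v) (not_lt.mp (mem_filter.mp hv).2)]
  have hlow : ∀ v ∈ {v ∈ S | G.degree v < G.maxDegree}, μ / (μ - δ) ≤ μ / (μ - G.degree v) :=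
    fun v _ => div_le_div_of_nonneg_left hμ0.le (sub_pos.mpr (hdeg v))
      (sub_le_sub_left (Nat.cast_le.mpr (G.minDegree_le_degree v)) μ)
  have hweights : #{v ∈ S | ¬G.degree v < G.maxDegree} * (μ / (μ - Δ))
      + #{v ∈ S | G.degree v < G.maxDegree} * (μ / (μ - δ)) ≤ Fintype.card V := by
    refine le_trans ?_ (sum_div_sub_degree_le hμ hS fun v _ => hdeg v)
    rw [← sum_filter_not_add_sum_filter S (fun v => G.degree v < G.maxDegree)]
    simp only [← nsmul_eq_mul]
    exact add_le_add (card_nsmul_le_sum _ _ _ hmax) (card_nsmul_le_sum _ _ _ hlow)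
  rw [← card_filter_add_card_filter_not (fun v => G.degree v < G.maxDegree), Nat.cast_add]
  set q : ℝ := ((#{v ∈ S | G.degree v < G.maxDegree} : ℕ) : ℝ)
  set p : ℝ := ((#{v ∈ S | ¬G.degree v < G.maxDegree} : ℕ) : ℝ)
  have hp : p = (μ - Δ) / μ * (p * (μ / (μ - Δ))) := by
    field_simp [(sub_pos.mpr hΔμ).ne']
  calc q + p ≤ (μ - Δ) / μ * Fintype.card V - (μ - Δ) / μ * (q * (μ / (μ - δ))) + q := by
        linarith [hp, mul_le_mul_of_nonneg_left hweights (div_nonneg (sub_pos.mpr hΔμ).le hμ0.le)]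
    _ = _ := by field_simp [(sub_pos.mpr hδμ).ne']; ring

end SimpleGraph

section

variable {V : Type*} (G : SimpleGraph V)

lemma indepNum_eq_simpleGraph_indepNum : indepNum G = G.indepNum := by
  simp only [indepNum, SimpleGraph.indepNum, SimpleGraph.isNIndepSet_iff]
  congr! with n s
  exact SimpleGraph.isIndepSet_iff_forall_not_adj.symm

lemma deg_eq_degree (v : V) [Fintype (G.neighborSet v)] : deg G v = G.degree v := by
  rw [deg, Set.ncard_eq_toFinset_card']
  exact G.card_neighborFinset_eq_degree v

variable [Fintype V] [DecidableRel G.Adj]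

lemma maxDeg_eq_maxDegree : maxDeg G = G.maxDegree := by
  refine le_antisymm (csSup_le' ?_) (G.maxDegree_le_of_forall_degree_le _ fun v => ?_)
  · rintro _ ⟨v, rfl⟩
    exact (deg_eq_degree G v).trans_le (G.degree_le_maxDegree v)
  · exact deg_eq_degree G v ▸ le_csSup (Set.finite_range _).bddAbove ⟨v, rfl⟩

lemma minDeg_eq_minDegree [Nonempty V] : minDeg G = G.minDegree := by
  obtain ⟨v, hv⟩ := G.exists_minimal_degree_vertex
  refine le_antisymm (hv ▸ Nat.sInf_le ⟨v, deg_eq_degree G v⟩) (le_csInf (Set.range_nonempty _) ?_)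
  rintro _ ⟨w, rfl⟩
  exact deg_eq_degree G w ▸ G.minDegree_le_degree w

lemma eigenvalues_le_lapMax [DecidableEq V] (i : V) :
    (G.posSemidef_lapMatrix ℝ).1.eigenvalues i ≤ lapMax G := by
  have hlapMax : lapMax G = ⨆ j, (G.posSemidef_lapMatrix ℝ).1.eigenvalues j := by
    unfold lapMax
    congr!
  exact hlapMax ▸ le_ciSup (Set.finite_range _).bddAbove i

end

/-- **The relative bound** (Theorem 2): for a graph with at least one edge,
the independence number satisfies `α ≤ n (1 - Δ / λ_max) + α' (Δ - δ)/(λ_max - δ)`,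
where `α'` is the independence number of the derived graph. -/
theorem relative_bound {V : Type*} [Fintype V] (G : SimpleGraph V)
    (hne : ∃ v w, G.Adj v w) :
    (indepNum G : ℝ) ≤ (Fintype.card V : ℝ) * (1 - (maxDeg G : ℝ) / lapMax G)
      + (indepNum (derived G) : ℝ) * ((maxDeg G : ℝ) - (minDeg G : ℝ)) / (lapMax G - (minDeg G : ℝ)) := by
  classical
  obtain ⟨v, w, hvw⟩ := hne
  have : Nonempty V := ⟨v⟩
  have hΔμ : (G.maxDegree : ℝ) < lapMax G := by
    obtain ⟨u, hu⟩ := G.exists_maximal_degree_vertex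
    have hpos : 0 < G.degree u :=
      hu ▸ ((G.degree_pos_iff_exists_adj v).mpr ⟨w, hvw⟩).trans_le (G.degree_le_maxDegree v)
    exact hu ▸ SimpleGraph.degree_lt_of_eigenvalues_le (eigenvalues_le_lapMax G) hpos
  obtain ⟨S, hS⟩ := G.exists_isNIndepSet_indepNum
  have hderived : #{u ∈ S | G.degree u < G.maxDegree} ≤ indepNum (derived G) := by
    rw [indepNum_eq_simpleGraph_indepNum]
    have hind : G.IsIndepSet ↑({u ∈ S | G.degree u < G.maxDegree} : Finset V) :=
      hS.isIndepSet.mono (coe_subset.mpr (filter_subset _ S))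
    refine hind.card_le_indepNum_induce ?_
    intro u hu
    simpa [deg_eq_degree, maxDeg_eq_maxDegree] using (mem_filter.mp hu).2
  generalize indepNum (derived G) = α' at hderived
  rw [indepNum_eq_simpleGraph_indepNum, ← hS.card_eq, maxDeg_eq_maxDegree, minDeg_eq_minDegree]
  refine (SimpleGraph.card_le_of_isIndepSet (eigenvalues_le_lapMax G) hΔμ hS.isIndepSet).trans ?_
  have hδΔ : (G.minDegree : ℝ) ≤ G.maxDegree := Nat.cast_le.mpr G.minDegree_le_maxDegree
  gcongr
  linarith
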